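/- arXiv:2011.03038 — 4 statements merged into one kernel-verified Lean document; each statement's English description precedes it below -/
import Mathlib

section
/- Suppose the j-th constraint of the feasible region {x : Ax ≥ b, Wx ≥ q} is non-redundant, i.e., there exists a feasible point x̂ with a_j·x̂ = b_j, and a_j ≠ 0. Then the single-observation inverse optimization problem SIO(x⁰) is feasible: there exist c, y ≥ 0, and ε such that A(x⁰−ε) ≥ b, W(x⁰−ε) ≥ q, c'(x⁰−ε) = b'y, A'y = c, and ‖c‖ = 1. -/
open Matrix BigOperators

/-- Feasibility of the single-observation inverse problem SIO(x⁰):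
if the `j`-th relevant constraint is non-redundant (tight at some feasible `xhat`)
and `a_j ≠ 0`, then there exist `c`, `y ≥ 0` and a perturbation `ε` with
`A(x⁰−ε) ≥ b`, `W(x⁰−ε) ≥ q`, `c'(x⁰−ε) = b'y`, `A'y = c`, and `‖c‖ = 1`. -/
theorem SIO_feasible
    {n m₁ m₂ : ℕ} (A : Matrix (Fin m₁) (Fin n) ℝ) (b : Fin m₁ → ℝ)
    (W : Matrix (Fin m₂) (Fin n) ℝ) (q : Fin m₂ → ℝ)
    (j : Fin m₁) (hAj : A j ≠ 0)
    (xhat : Fin n → ℝ) (hxhatA : b ≤ A.mulVec xhat) (hxhatW : q ≤ W.mulVec xhat)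
    (htight : A.mulVec xhat j = b j)
    (x0 : Fin n → ℝ) :
    ∃ (c : Fin n → ℝ) (y : Fin m₁ → ℝ) (ε : Fin n → ℝ),
      0 ≤ y ∧
      b ≤ A.mulVec (x0 - ε) ∧
      q ≤ W.mulVec (x0 - ε) ∧
      c ⬝ᵥ (x0 - ε) = b ⬝ᵥ y ∧
      Aᵀ.mulVec y = c ∧
      ‖c‖ = 1 := by
  have hnorm : ‖A j‖ ≠ 0 := norm_ne_zero_iff.mpr hAj
  refine ⟨‖A j‖⁻¹ • A j, Pi.single j ‖A j‖⁻¹, x0 - xhat, ?_, ?_, ?_, ?_, ?_, ?_⟩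
  · intro i
    by_cases h : i = j
    · subst h; simp only [Pi.single_eq_same, Pi.zero_apply]
      positivity
    · simp [Pi.single_eq_of_ne h]
  · simpa using hxhatA
  · simpa using hxhatW
  · have h1 : (‖A j‖⁻¹ • A j) ⬝ᵥ (x0 - (x0 - xhat)) = ‖A j‖⁻¹ * (A j ⬝ᵥ xhat) := by
      simp [smul_dotProduct, smul_eq_mul]
    have h2 : b ⬝ᵥ Pi.single j ‖A j‖⁻¹ = b j * ‖A j‖⁻¹ := by
      simp [dotProduct, Pi.single_apply]
    rw [h1, h2]
    have : A j ⬝ᵥ xhat = b j := htight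
    rw [this]; ring
  · funext i
    simp [Matrix.mulVec, dotProduct, Pi.single_apply, mul_comm]
  · rw [norm_smul]
    simp [abs_of_nonneg (inv_nonneg.mpr (norm_nonneg _)), inv_mul_cancel₀ hnorm]
end

section
/- If IO(X) has an optimal solution, then it has an optimal solution (c, y, E, z) in which c is a positive scalar multiple of a single row a_j of A, namely c = a_j/‖a_j‖ for some j with a_j·z = b_j. (The swap of cost vector preserves feasibility and does not change the objective value, which depends only on the perturbations.) -/
open Matrix BigOperators

/-- Feasibility of the multi-observation inverse optimization problem IO(X). -/
def IOFeas {n m₁ m₂ K : ℕ} (A : Matrix (Fin m₁) (Fin n) ℝ) (b : Fin m₁ → ℝ)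
    (W : Matrix (Fin m₂) (Fin n) ℝ) (q : Fin m₂ → ℝ) (x : Fin K → Fin n → ℝ)
    (c : Fin n → ℝ) (y : Fin m₁ → ℝ) (z : Fin n → ℝ) (E : Fin K → Fin n → ℝ) : Prop :=
  b ≤ A.mulVec z ∧ q ≤ W.mulVec z ∧ c ⬝ᵥ z = b ⬝ᵥ y ∧ Aᵀ.mulVec y = c ∧
    ‖c‖ = 1 ∧ 0 ≤ y ∧ ∀ k, z = x k - E k

/-- If IO(X) has an optimal solution, it has one whose cost vector is
a normalized row `a_j/‖a_j‖` of `A` for some constraint `j` tight at `z`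
(the objective depends only on the perturbations). -/
theorem IO_has_row_aligned_optimal_solution
    {n m₁ m₂ K : ℕ} (A : Matrix (Fin m₁) (Fin n) ℝ) (b : Fin m₁ → ℝ)
    (W : Matrix (Fin m₂) (Fin n) ℝ) (q : Fin m₂ → ℝ) (x : Fin K → Fin n → ℝ)
    (hrows : ∀ j, A j ≠ 0)
    (D : (Fin K → Fin n → ℝ) → ℝ) (hD : ∀ E, 0 ≤ D E)
    (hopt : ∃ c y z E, IOFeas A b W q x c y z E ∧
      ∀ c' y' z' E', IOFeas A b W q x c' y' z' E' → D E ≤ D E') :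
    ∃ c y z E, (IOFeas A b W q x c y z E ∧
      ∀ c' y' z' E', IOFeas A b W q x c' y' z' E' → D E ≤ D E') ∧
      ∃ j : Fin m₁, c = ‖A j‖⁻¹ • A j ∧ A.mulVec z j = b j := by
  obtain ⟨c, y, z, E, ⟨h1, h2, h3, h4, h5, h6, h7⟩, hoptm⟩ := hopt
  -- c ≠ 0
  have hc0 : c ≠ 0 := by
    intro h; rw [h] at h5; simp at h5
  -- some y j > 0
  have hy0 : y ≠ 0 := by
    intro h; rw [h] at h4
    apply hc0; rw [← h4]; ext i; simp [Matrix.mulVec, dotProduct]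
  obtain ⟨j, hj⟩ : ∃ j, 0 < y j := by
    by_contra h
    push_neg at h
    exact hy0 (funext fun i => le_antisymm (h i) (h6 i))
  -- complementary slackness: y ⬝ (Az - b) = 0
  have hdot : y ⬝ᵥ A.mulVec z = c ⬝ᵥ z := by
    rw [← h4]
    simp [Matrix.mulVec, dotProduct, Matrix.transpose, Finset.mul_sum, Finset.sum_mul]
    rw [Finset.sum_comm]
    congr 1; ext i; congr 1; ext k; ring
  have hsum : ∑ i, y i * (A.mulVec z i - b i) = 0 := by
    have : ∑ i, y i * (A.mulVec z i - b i)
        = y ⬝ᵥ A.mulVec z - b ⬝ᵥ y := by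
      simp [dotProduct, mul_sub, Finset.sum_sub_distrib, mul_comm]
    rw [this, hdot, h3, sub_self]
  have htight : A.mulVec z j = b j := by
    have hnn : ∀ i ∈ Finset.univ, 0 ≤ y i * (A.mulVec z i - b i) :=
      fun i _ => mul_nonneg (h6 i) (sub_nonneg.mpr (h1 i))
    have := (Finset.sum_eq_zero_iff_of_nonneg hnn).mp hsum j (Finset.mem_univ j)
    rcases mul_eq_zero.mp this with h | h
    · exact absurd h hj.ne'
    · linarith [sub_eq_zero.mp h]
  -- new solution
  have hAj : ‖A j‖ ≠ 0 := norm_ne_zero_iff.mpr (hrows j)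
  refine ⟨‖A j‖⁻¹ • A j, Pi.single j ‖A j‖⁻¹, z, E, ⟨⟨h1, h2, ?_, ?_, ?_, ?_, h7⟩, ?_⟩,
    j, rfl, htight⟩
  · -- c' ⬝ z = b ⬝ y'
    have : (‖A j‖⁻¹ • A j) ⬝ᵥ z = ‖A j‖⁻¹ * (A j ⬝ᵥ z) := by
      simp [dotProduct, Finset.mul_sum, mul_assoc]
    rw [this]
    have : A j ⬝ᵥ z = b j := htight
    rw [this, dotProduct_single, mul_comm]
  · -- Aᵀ y' = c'
    ext i
    simp [Matrix.mulVec, dotProduct, Pi.single_apply, mul_comm]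
  · rw [norm_smul, norm_inv, norm_norm, inv_mul_cancel₀ hAj]
  · intro i
    simp only [Pi.single_apply]
    by_cases h : i = j <;> simp [h, inv_nonneg.mpr (norm_nonneg _)]
  · intro c' y' z' E' hf
    exact hoptm c' y' z' E' hf
end

section
/- Let D* be the optimal value of IO(X) and, for each j ∈ {1,…,m₁}, let D_j* be the optimal value of the linearly-constrained problem BIL_j(X): minimize D(E,A) over z with a_j·z = b_j, Az ≥ b, Wz ≥ q, and ε^k = x^k − z. Then D* = min_{j ∈ {1,…,m₁}} D_j*, i.e., the enumeration algorithm over relevant constraints solves IO exactly. -/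
open Matrix BigOperators

/-- The optimal value `D*` of IO(X) equals the minimum over `j` of the
optimal values `D_j*` of the linearly-constrained problems BIL_j(X): the enumeration
algorithm over relevant constraints solves IO exactly. -/
theorem IO_value_eq_min_BIL_values
    {n m₁ m₂ K : ℕ} (A : Matrix (Fin m₁) (Fin n) ℝ) (b : Fin m₁ → ℝ)
    (W : Matrix (Fin m₂) (Fin n) ℝ) (q : Fin m₂ → ℝ) (x : Fin K → Fin n → ℝ)
    (D : (Fin K → Fin n → ℝ) → ℝ) (hD : ∀ E, 0 ≤ D E)
    (hrows : ∀ j, A j ≠ 0)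
    (hnonred : ∀ j : Fin m₁, ∃ xh : Fin n → ℝ,
      b ≤ A.mulVec xh ∧ q ≤ W.mulVec xh ∧ A.mulVec xh j = b j) :
    sInf {d : ℝ | ∃ (c : Fin n → ℝ) (y : Fin m₁ → ℝ) (z : Fin n → ℝ),
        b ≤ A.mulVec z ∧ q ≤ W.mulVec z ∧ c ⬝ᵥ z = b ⬝ᵥ y ∧
        Aᵀ.mulVec y = c ∧ ‖c‖ = 1 ∧ 0 ≤ y ∧
        d = D (fun k => x k - z)} =
      ⨅ j : Fin m₁, sInf {d : ℝ | ∃ z : Fin n → ℝ,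
        A.mulVec z j = b j ∧ b ≤ A.mulVec z ∧ q ≤ W.mulVec z ∧
        d = D (fun k => x k - z)} := by
  set T : Fin m₁ → Set ℝ := fun j => {d : ℝ | ∃ z : Fin n → ℝ,
        A.mulVec z j = b j ∧ b ≤ A.mulVec z ∧ q ≤ W.mulVec z ∧
        d = D (fun k => x k - z)} with hT
  set S : Set ℝ := {d : ℝ | ∃ (c : Fin n → ℝ) (y : Fin m₁ → ℝ) (z : Fin n → ℝ),
        b ≤ A.mulVec z ∧ q ≤ W.mulVec z ∧ c ⬝ᵥ z = b ⬝ᵥ y ∧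
        Aᵀ.mulVec y = c ∧ ‖c‖ = 1 ∧ 0 ≤ y ∧
        d = D (fun k => x k - z)} with hS
  have hSeq : S = ⋃ j, T j := by
    ext d
    simp only [hS, hT, Set.mem_setOf_eq, Set.mem_iUnion]
    constructor
    · rintro ⟨c, y, z, hfa, hfw, hsd, hc, hcn, hy, hd⟩
      -- complementary slackness: some tight constraint with y j > 0
      have hyne : y ≠ 0 := by
        intro h0
        rw [h0] at hc
        simp [Matrix.mulVec_zero] at hc
        rw [← hc] at hcn
        simp at hcn
      have key : y ⬝ᵥ (A.mulVec z - b) = 0 := by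
        have h1 : c ⬝ᵥ z = y ⬝ᵥ A.mulVec z := by
          rw [← hc, Matrix.mulVec_transpose, ← Matrix.dotProduct_mulVec]
        have h2 : b ⬝ᵥ y = y ⬝ᵥ b := dotProduct_comm _ _
        rw [dotProduct_sub, ← h1, hsd, h2, sub_self]
      have hterm : ∀ i ∈ Finset.univ, (0:ℝ) ≤ y i * (A.mulVec z - b) i := by
        intro i _
        exact mul_nonneg (hy i) (by simpa using sub_nonneg.mpr (hfa i))
      have hzero : ∀ i ∈ Finset.univ, y i * (A.mulVec z - b) i = 0 := by
        rw [← Finset.sum_eq_zero_iff_of_nonneg hterm]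
        exact key
      obtain ⟨j, hj⟩ := Function.ne_iff.mp hyne
      refine ⟨j, z, ?_, hfa, hfw, hd⟩
      have := hzero j (Finset.mem_univ j)
      have hyj : y j ≠ 0 := by simpa using hj
      have : (A.mulVec z - b) j = 0 := by
        rcases mul_eq_zero.mp this with h | h
        · exact absurd h hyj
        · exact h
      have := sub_eq_zero.mp (by simpa using this)
      exact this
    · rintro ⟨j, z, htight, hfa, hfw, hd⟩
      -- build certificate from row j
      have hAj : ‖A j‖ ≠ 0 := norm_ne_zero_iff.mpr (hrows j)
      refine ⟨(‖A j‖)⁻¹ • A j, Pi.single j (‖A j‖)⁻¹, z, hfa, hfw, ?_, ?_, ?_, ?_, hd⟩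
      · have h1 : ((‖A j‖)⁻¹ • A j) ⬝ᵥ z = (‖A j‖)⁻¹ * (A j ⬝ᵥ z) := by
          simp [smul_dotProduct, smul_eq_mul]
        have h2 : b ⬝ᵥ Pi.single j (‖A j‖)⁻¹ = b j * (‖A j‖)⁻¹ := by
          simp [dotProduct, Pi.single_apply, mul_ite, Finset.sum_ite_eq']
        have h3 : A j ⬝ᵥ z = b j := htight
        rw [h1, h2, h3, mul_comm]
      · ext i
        simp [Matrix.mulVec, dotProduct, Pi.single_apply, mul_ite,
          Finset.sum_ite_eq', Matrix.transpose_apply, mul_comm]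
      · rw [norm_smul]
        simp [hAj]
      · intro i
        classical
        by_cases h : i = j
        · subst h; simp [Pi.single_apply]
        · simp [Pi.single_apply, h]
  rw [hSeq]
  rcases Nat.eq_zero_or_pos m₁ with hm | hm
  · subst hm
    simp [Real.iInf_of_isEmpty]
  · have : Nonempty (Fin m₁) := ⟨⟨0, hm⟩⟩
    have hTne : ∀ j, (T j).Nonempty := by
      intro j
      obtain ⟨xh, h1, h2, h3⟩ := hnonred j
      exact ⟨D (fun k => x k - xh), xh, h3, h1, h2, rfl⟩
    have hbdd : BddBelow (⋃ j, T j) := by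
      refine ⟨0, ?_⟩
      rintro d hd
      simp only [Set.mem_iUnion, hT, Set.mem_setOf_eq] at hd
      obtain ⟨j, z, _, _, _, rfl⟩ := hd
      exact hD _
    have hbddj : ∀ j, BddBelow (T j) := fun j =>
      hbdd.mono (Set.subset_iUnion T j)
    apply le_antisymm
    · apply le_ciInf
      intro j
      exact csInf_le_csInf hbdd (hTne j) (Set.subset_iUnion T j)
    · apply le_csInf ((hTne ⟨0, hm⟩).mono (Set.subset_iUnion T ⟨0, hm⟩))
      rintro d hd
      simp only [Set.mem_iUnion] at hd
      obtain ⟨j, hdj⟩ := hd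
      exact le_trans (ciInf_le (by
        refine ⟨0, ?_⟩
        rintro r ⟨j', rfl⟩
        exact le_csInf (hTne j') (by rintro d' ⟨z, _, _, _, rfl⟩; exact hD _)) j)
        (csInf_le (hbddj j) hdj)
end

section
/- Let z* be feasible for {Ax ≥ b, Wx ≥ q} with tight relevant index set T ≠ ∅, and let c̄ = Σ_{t∈T} λ_t a_t with λ_t ≥ 0 and c̄ ≠ 0. Define ȳ ∈ ℝ^{m₁} by ȳ_t = λ_t for t ∈ T and ȳ_j = 0 otherwise. Then (c̄/‖c̄‖, ȳ/‖c̄‖, z*) satisfies all constraints of IO: primal feasibility of z*, A'(ȳ/‖c̄‖) = c̄/‖c̄‖, strong duality (c̄/‖c̄‖)'z* = b'(ȳ/‖c̄‖), nonnegativity, and normalization. -/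
open Matrix BigOperators

/-- If `z*` is feasible with nonempty tight relevant index set `T`, and
`c̄ = Σ_{t∈T} λ_t a_t ≠ 0` with `λ ≥ 0`, then with `ȳ` supported on `T` by `λ`, the
normalized triple `(c̄/‖c̄‖, ȳ/‖c̄‖, z*)` satisfies all constraints of IO. -/
theorem cone_combination_is_IO_feasible
    {n m₁ m₂ : ℕ} (A : Matrix (Fin m₁) (Fin n) ℝ) (b : Fin m₁ → ℝ)
    (W : Matrix (Fin m₂) (Fin n) ℝ) (q : Fin m₂ → ℝ)
    (zstar : Fin n → ℝ) (hzA : b ≤ A.mulVec zstar) (hzW : q ≤ W.mulVec zstar)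
    (T : Finset (Fin m₁)) (hTne : T.Nonempty)
    (hT : ∀ t ∈ T, A.mulVec zstar t = b t)
    (lam : Fin m₁ → ℝ) (hlam : ∀ t, 0 ≤ lam t)
    (cbar : Fin n → ℝ) (hcbar : cbar = ∑ t ∈ T, lam t • A t) (hne : cbar ≠ 0) :
    let ybar : Fin m₁ → ℝ := fun j => if j ∈ T then lam j else 0
    b ≤ A.mulVec zstar ∧
    q ≤ W.mulVec zstar ∧
    Aᵀ.mulVec (‖cbar‖⁻¹ • ybar) = ‖cbar‖⁻¹ • cbar ∧
    (‖cbar‖⁻¹ • cbar) ⬝ᵥ zstar = b ⬝ᵥ (‖cbar‖⁻¹ • ybar) ∧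
    0 ≤ ‖cbar‖⁻¹ • ybar ∧
    ‖‖cbar‖⁻¹ • cbar‖ = 1 := by
  intro ybar
  have hnorm : ‖cbar‖ ≠ 0 := norm_ne_zero_iff.mpr hne
  have hinv : (0:ℝ) ≤ ‖cbar‖⁻¹ := inv_nonneg.mpr (norm_nonneg _)
  have hAy : Aᵀ.mulVec ybar = cbar := by
    funext i
    rw [hcbar]
    simp only [mulVec, dotProduct, transpose_apply, ybar]
    simp only [mul_ite, mul_zero]
    rw [Finset.sum_ite_mem, Finset.univ_inter, Finset.sum_apply]
    exact Finset.sum_congr rfl fun t ht => by simp [mul_comm]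
  have hstrong : cbar ⬝ᵥ zstar = b ⬝ᵥ ybar := by
    simp only [dotProduct, ybar, mul_ite, mul_zero]
    rw [Finset.sum_ite_mem, Finset.univ_inter, hcbar]
    simp only [Finset.sum_apply, Pi.smul_apply, smul_eq_mul, Finset.sum_mul]
    rw [Finset.sum_comm]
    refine Finset.sum_congr rfl fun t ht => ?_
    have hb := hT t ht
    simp only [mulVec, dotProduct] at hb
    calc ∑ x, lam t * A t x * zstar x = lam t * ∑ x, A t x * zstar x := by
          rw [Finset.mul_sum]; exact Finset.sum_congr rfl fun x _ => by ring
      _ = b t * lam t := by rw [hb]; ring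
  refine ⟨hzA, hzW, ?_, ?_, ?_, ?_⟩
  · rw [Matrix.mulVec_smul, hAy]
  · rw [smul_dotProduct, dotProduct_smul, hstrong]
  · intro j
    simp only [Pi.smul_apply, Pi.zero_apply, smul_eq_mul, ybar]
    have := hlam j
    split_ifs <;> positivity
  · rw [norm_smul]
    simp [hnorm, abs_of_nonneg hinv, inv_mul_cancel₀ hnorm]
end
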